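/- arXiv:1405.4149 — 4 statements merged into one kernel-verified Lean document; each statement's English description precedes it below -/
import Mathlib

section
/- Let C > 0 and let d : ℕ × ℤ → ℝ be a function defined on the index set S = {(N, I) ∈ ℕ × ℤ : |I| ≤ N and N + I is even} satisfying: (i) for all (N, I) ∈ S with I ≥ 0, |d(N+1, I+1) − d(N, I)| ≤ C; (ii) for all (N, I) ∈ S with I ≤ 0, |d(N+1, I−1) − d(N, I)| ≤ C; (iii) for all even N, |d(N+2, 0) − d(N, 0)| ≤ C. Assume moreover that d(N, I) ≠ 0 whenever (N, I) ∈ S and N ≥ 1. Then for every real number α with 0 < α ≤ 3, the function (N, I, J) ↦ |d(N, I)|^{−α} is NOT summable over the set T = {(N, I, J) ∈ ℕ × ℤ × ℤ : N ≥ 1, |I| ≤ N, |J| ≤ N, N + I even, N + J even}. -/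
/-!
The conditions on `d` bound its jumps along the diagonal `(2m, 0) → (2m + 2, 0)` and along the
edges `(N, I) → (N + 1, I + 1)`, and every `(2n, 2i)` with `0 ≤ i ≤ n` is reached from `(0, 0)`
by `n - i` diagonal and `2i` edge steps. Hence `|d (2n, 2i)| ≤ b n` for `n ≥ 1` and a constant
`b ≥ 1`, so, as `α ≤ 3`, each of the `(n + 1)²` indices `(2(n + 1), 2i, 2j)`, `0 ≤ i, j ≤ n`,
contributes at least `(b (n + 1))^(-3)`, and the series dominates a multiple of the harmonic one.
-/

open Real

theorem abs_le_abs_zero_add_mul_of_abs_sub_le {f : ℕ → ℝ} {C : ℝ}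
    (h : ∀ k, |f (k + 1) - f k| ≤ C) (n : ℕ) : |f n| ≤ |f 0| + C * n := by
  induction n with
  | zero => simp
  | succ n ih =>
    have := abs_sub_abs_le_abs_sub (f (n + 1)) (f n)
    push_cast
    linarith [h n]

theorem rpow_neg_le_rpow_neg_of_le {x y α β : ℝ} (hx : 0 < x) (hxy : x ≤ y) (hy : 1 ≤ y)
    (hα : 0 ≤ α) (hαβ : α ≤ β) : y ^ (-β) ≤ x ^ (-α) :=
  calc y ^ (-β) ≤ y ^ (-α) := rpow_le_rpow_of_exponent_le hy (neg_le_neg hαβ)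
    _ ≤ x ^ (-α) := rpow_le_rpow_of_nonpos hx hxy (neg_nonpos.mpr hα)

theorem not_summable_of_rpow_neg_three_le {c : ℝ} (hc : 0 < c)
    {f : (Σ n : ℕ, Fin (n + 1) × Fin (n + 1)) → ℝ}
    (hf : ∀ x, c * ((x.1 : ℝ) + 1) ^ (-3 : ℝ) ≤ f x) : ¬ Summable f := by
  intro hsum
  have hg : Summable fun x : Σ n : ℕ, Fin (n + 1) × Fin (n + 1) =>
      c * ((x.1 : ℝ) + 1) ^ (-3 : ℝ) :=
    hsum.of_nonneg_of_le (fun x => by positivity) hf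
  have hfiber := ((summable_sigma_of_nonneg fun x => by positivity).mp hg).2
  have fiber_sum : ∀ n : ℕ, ∑' _ : Fin (n + 1) × Fin (n + 1), c * ((n : ℝ) + 1) ^ (-3 : ℝ)
      = c * ((n : ℝ) + 1) ^ (-1 : ℝ) := by
    intro n
    have hn : (0 : ℝ) < (n : ℝ) + 1 := by positivity
    rw [tsum_fintype, Finset.sum_const, Finset.card_univ, Fintype.card_prod, Fintype.card_fin,
      nsmul_eq_mul]
    push_cast
    rw [show (-1 : ℝ) = 2 + -3 by norm_num, rpow_add hn, rpow_two]
    ring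
  have harmonic : Summable fun n : ℕ => ((n + 1 : ℕ) : ℝ) ^ (-1 : ℝ) := by
    exact_mod_cast (summable_mul_left_iff hc.ne').mp (hfiber.congr fiber_sum)
  exact lt_irrefl _ (summable_nat_rpow.mp ((summable_nat_add_iff 1).mp harmonic))

section LinearGrowth

variable {C : ℝ} {d : ℕ × ℤ → ℝ}

theorem abs_apply_two_mul_zero_le (h3 : ∀ N : ℕ, Even N → |d (N + 2, 0) - d (N, 0)| ≤ C)
    (m : ℕ) : |d (2 * m, 0)| ≤ |d (0, 0)| + C * m :=
  abs_le_abs_zero_add_mul_of_abs_sub_le (f := fun m => d (2 * m, 0))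
    (fun m => by simpa [mul_add] using h3 (2 * m) (even_two_mul m)) m

theorem abs_apply_two_mul_add_le
    (h1 : ∀ (N : ℕ) (I : ℤ), |I| ≤ (N : ℤ) → Even ((N : ℤ) + I) → 0 ≤ I →
      |d (N + 1, I + 1) - d (N, I)| ≤ C) (m k : ℕ) :
    |d (2 * m + k, k)| ≤ |d (2 * m, 0)| + C * k :=
  abs_le_abs_zero_add_mul_of_abs_sub_le (f := fun k => d (2 * m + k, k))
    (fun k => by
      simpa [add_assoc] using
        h1 (2 * m + k) k (by simp) ⟨m + k, by push_cast; ring⟩ (by positivity))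
    k

theorem abs_apply_two_mul_two_mul_le
    (h1 : ∀ (N : ℕ) (I : ℤ), |I| ≤ (N : ℤ) → Even ((N : ℤ) + I) → 0 ≤ I →
      |d (N + 1, I + 1) - d (N, I)| ≤ C)
    (h3 : ∀ N : ℕ, Even N → |d (N + 2, 0) - d (N, 0)| ≤ C) {n i : ℕ} (hi : i ≤ n) :
    |d (2 * n, 2 * i)| ≤ |d (0, 0)| + 2 * C * n := by
  obtain ⟨m, rfl⟩ := Nat.exists_eq_add_of_le' hi
  have hC : 0 ≤ C := (abs_nonneg _).trans (h3 0 Even.zero)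
  have := (abs_apply_two_mul_add_le h1 m (2 * i)).trans
    (add_le_add_left (abs_apply_two_mul_zero_le h3 m) _)
  push_cast at this ⊢
  rw [show 2 * (m + i) = 2 * m + 2 * i by ring]
  nlinarith

end LinearGrowth

abbrev BasisIndex : Type :=
  {p : ℕ × ℤ × ℤ // 1 ≤ p.1 ∧ |p.2.1| ≤ (p.1 : ℤ) ∧ |p.2.2| ≤ (p.1 : ℤ) ∧
    Even ((p.1 : ℤ) + p.2.1) ∧ Even ((p.1 : ℤ) + p.2.2)}

def evenBasisIndex (x : Σ n : ℕ, Fin (n + 1) × Fin (n + 1)) : BasisIndex :=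
  ⟨(2 * (x.1 + 1), 2 * (x.2.1 : ℕ), 2 * (x.2.2 : ℕ)), by
    have hi := x.2.1.isLt
    have hj := x.2.2.isLt
    refine ⟨by omega, ?_, ?_, ⟨x.1 + 1 + x.2.1, by push_cast; ring⟩,
      ⟨x.1 + 1 + x.2.2, by push_cast; ring⟩⟩ <;>
    · rw [abs_of_nonneg (by positivity)]; push_cast; omega⟩

theorem evenBasisIndex_injective : Function.Injective evenBasisIndex := by
  rintro ⟨n, i, j⟩ ⟨m, i', j'⟩ h
  simp only [evenBasisIndex, Subtype.mk.injEq, Prod.mk.injEq] at h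
  obtain ⟨hn, hi, hj⟩ := h
  obtain rfl : n = m := by omega
  obtain rfl : i = i' := Fin.ext (by omega)
  obtain rfl : j = j' := Fin.ext (by omega)
  rfl

theorem stmt_1_general (C : ℝ) (d : ℕ × ℤ → ℝ)
    (h1 : ∀ (N : ℕ) (I : ℤ), |I| ≤ (N : ℤ) → Even ((N : ℤ) + I) → 0 ≤ I →
      |d (N + 1, I + 1) - d (N, I)| ≤ C)
    (h3 : ∀ N : ℕ, Even N → |d (N + 2, 0) - d (N, 0)| ≤ C)
    (hne : ∀ (N : ℕ) (I : ℤ), |I| ≤ (N : ℤ) → Even ((N : ℤ) + I) → 1 ≤ N →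
      d (N, I) ≠ 0) :
    ∀ α : ℝ, 0 < α → α ≤ 3 →
      ¬ Summable (fun x : {p : ℕ × ℤ × ℤ // 1 ≤ p.1 ∧ |p.2.1| ≤ (p.1 : ℤ) ∧
            |p.2.2| ≤ (p.1 : ℤ) ∧ Even ((p.1 : ℤ) + p.2.1) ∧
            Even ((p.1 : ℤ) + p.2.2)} =>
          |d (x.1.1, x.1.2.1)| ^ (-α)) := by
  intro α hα hα3 hsum
  set b := |d (0, 0)| + 2 * C + 1
  have hC : 0 ≤ C := (abs_nonneg _).trans (h3 0 Even.zero)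
  have hb : 1 ≤ b := by linarith [abs_nonneg (d (0, 0))]
  refine not_summable_of_rpow_neg_three_le (c := b ^ (-3 : ℝ)) (by positivity)
    (fun x => ?_) (hsum.comp_injective evenBasisIndex_injective)
  obtain ⟨n, i, j⟩ := x
  obtain ⟨hN, hI, -, hNI, -⟩ := (evenBasisIndex ⟨n, i, j⟩).2
  have hpos : 0 < |d (2 * (n + 1), 2 * (i : ℕ))| := abs_pos.mpr (hne _ _ hI hNI hN)
  have hle : |d (2 * (n + 1), 2 * (i : ℕ))| ≤ b * ((n : ℝ) + 1) := by
    have := abs_apply_two_mul_two_mul_le h1 h3 (n := n + 1) (i.is_le.trans n.le_succ)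
    push_cast at this
    nlinarith [abs_nonneg (d (0, 0)), (n.cast_nonneg : (0 : ℝ) ≤ n)]
  rw [← mul_rpow (by positivity) (by positivity)]
  exact rpow_neg_le_rpow_neg_of_le hpos hle (one_le_mul_of_one_le_of_one_le hb (by simp))
    hα.le hα3

/-- (Lemma 3.1 of the paper.)  An SU(2)-equivariant self-adjoint
operator on L²(SU(2)) with bounded commutators with the generators of C(SU(2))
cannot be α-summable for α ≤ 3.  The set
T = {(N, I, J) : N ≥ 1, |I| ≤ N, |J| ≤ N, N + I even, N + J even} encodes the
orthonormal basis e^{(n)}_{ij} via N = 2n, I = 2i, J = 2j. -/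
theorem stmt_1 (C : ℝ) (hC : 0 < C) (d : ℕ × ℤ → ℝ)
    (h1 : ∀ (N : ℕ) (I : ℤ), |I| ≤ (N : ℤ) → Even ((N : ℤ) + I) → 0 ≤ I →
      |d (N + 1, I + 1) - d (N, I)| ≤ C)
    (h2 : ∀ (N : ℕ) (I : ℤ), |I| ≤ (N : ℤ) → Even ((N : ℤ) + I) → I ≤ 0 →
      |d (N + 1, I - 1) - d (N, I)| ≤ C)
    (h3 : ∀ N : ℕ, Even N → |d (N + 2, 0) - d (N, 0)| ≤ C)
    (hne : ∀ (N : ℕ) (I : ℤ), |I| ≤ (N : ℤ) → Even ((N : ℤ) + I) → 1 ≤ N →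
      d (N, I) ≠ 0) :
    ∀ α : ℝ, 0 < α → α ≤ 3 →
      ¬ Summable (fun x : {p : ℕ × ℤ × ℤ // 1 ≤ p.1 ∧ |p.2.1| ≤ (p.1 : ℤ) ∧
            |p.2.2| ≤ (p.1 : ℤ) ∧ Even ((p.1 : ℤ) + p.2.1) ∧
            Even ((p.1 : ℤ) + p.2.2)} =>
          |d (x.1.1, x.1.2.1)| ^ (-α)) :=
  stmt_1_general C d h1 h3 hne
end

section
/- Let n ≥ 1 be an integer, C > 0, and let d : ℤⁿ → ℝ satisfy |d(k + e_j) − d(k)| ≤ C for all k ∈ ℤⁿ and all 1 ≤ j ≤ n (e_j the j-th standard basis vector), and suppose d(k) ≠ 0 for all k ≠ 0. Then for every real number α with 0 < α ≤ n, the function k ↦ |d(k)|^{−α} is NOT summable over ℤⁿ \ {0}. -/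
/-!
The bounded differences make `d` Lipschitz for the `ℓ¹` distance on `ℤⁿ`, so `|d k| ≤ B N` on
the cube `[N, 2N)ⁿ` for a constant `B ≥ 1`. As `α ≤ n`, each of the `Nⁿ` points of the cube
contributes at least `(B N) ^ (-n)`, so every such cube carries mass at least `B ^ (-n)`; since
these cubes avoid any given finite set, the Cauchy criterion for summability fails.
-/

open Finset

lemma abs_sub_zero_le_mul_abs_of_abs_succ_sub_le {f : ℤ → ℝ} {C : ℝ}
    (hf : ∀ m, |f (m + 1) - f m| ≤ C) (m : ℤ) : |f m - f 0| ≤ C * |(m : ℝ)| := by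
  induction m with
  | zero => simp
  | succ i ih =>
    calc |f (i + 1) - f 0| ≤ |f (i + 1) - f i| + |f i - f 0| := abs_sub_le _ _ _
      _ ≤ C + C * i := add_le_add (hf i) (by simpa using ih)
      _ = C * |((i + 1 : ℤ) : ℝ)| := by push_cast; rw [abs_of_nonneg (by positivity)]; ring
  | pred i ih =>
    have step : |f (-i) - f (-i - 1)| ≤ C := by simpa using hf (-i - 1)
    calc |f (-i - 1) - f 0| ≤ |f (-i) - f (-i - 1)| + |f (-i) - f 0| := by
          rw [abs_sub_comm (f (-i))]; exact abs_sub_le _ _ _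
      _ ≤ C + C * i := add_le_add step (by simpa using ih)
      _ = C * |((-i - 1 : ℤ) : ℝ)| := by
          push_cast; rw [abs_of_nonpos (by linarith [i.cast_nonneg (α := ℝ)])]; ring

section Lattice

variable {ι : Type*} [Fintype ι] [DecidableEq ι] {d : (ι → ℤ) → ℝ} {C : ℝ}

lemma abs_add_sub_le_mul_sum_abs (h : ∀ k j, |d (k + Pi.single j 1) - d k| ≤ C)
    (k l : ι → ℤ) : |d (k + l) - d k| ≤ C * ∑ i, |(l i : ℝ)| := by
  suffices key : ∀ s : Finset ι, ∀ k,
      |d (k + ∑ i ∈ s, Pi.single i (l i)) - d k| ≤ C * ∑ i ∈ s, |(l i : ℝ)| by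
    simpa [Finset.univ_sum_single] using key univ k
  intro s
  induction s using Finset.induction_on with
  | empty => simp
  | insert j s hj ih =>
    intro k
    set k' := k + Pi.single j (l j)
    have step : |d k' - d k| ≤ C * |(l j : ℝ)| := by
      have := abs_sub_zero_le_mul_abs_of_abs_succ_sub_le (f := fun m => d (k + Pi.single j m))
        (fun m => by simpa only [Pi.single_add, ← add_assoc] using h (k + Pi.single j m) j) (l j)
      rwa [Pi.single_zero, add_zero] at this
    calc |d (k + ∑ i ∈ insert j s, Pi.single i (l i)) - d k|
        ≤ |d (k' + ∑ i ∈ s, Pi.single i (l i)) - d k'| + |d k' - d k| := by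
          rw [sum_insert hj, ← add_assoc]; exact abs_sub_le _ _ _
      _ ≤ C * ∑ i ∈ s, |(l i : ℝ)| + C * |(l j : ℝ)| := add_le_add (ih k') step
      _ = C * ∑ i ∈ insert j s, |(l i : ℝ)| := by rw [sum_insert hj]; ring

end Lattice

section LatticeCube

variable (ι : Type*) [Fintype ι] [DecidableEq ι]

noncomputable def latticeCube (N : ℕ) : Finset (ι → ℤ) :=
  Fintype.piFinset fun _ => Ico (N : ℤ) (2 * N)

variable {ι}

lemma mem_latticeCube {N : ℕ} {k : ι → ℤ} :
    k ∈ latticeCube ι N ↔ ∀ i, N ≤ k i ∧ k i < 2 * N := by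
  simp [latticeCube]

lemma card_latticeCube (N : ℕ) : #(latticeCube ι N) = N ^ Fintype.card ι := by
  simp [latticeCube, two_mul]

lemma ne_zero_of_mem_latticeCube [Nonempty ι] {N : ℕ} (hN : 0 < N) {k : ι → ℤ}
    (hk : k ∈ latticeCube ι N) : k ≠ 0 := by
  obtain ⟨i⟩ := ‹Nonempty ι›
  intro rfl
  have := (mem_latticeCube.1 hk i).1
  simp only [Pi.zero_apply] at this
  omega

lemma exists_disjoint_latticeCube [Nonempty ι] (s : Finset (ι → ℤ)) :
    ∃ N, 0 < N ∧ Disjoint (latticeCube ι N) s := by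
  obtain ⟨i⟩ := ‹Nonempty ι›
  refine ⟨s.sup (fun k => (k i).toNat) + 1, by omega, disjoint_left.2 fun k hk hks => ?_⟩
  have h1 := (mem_latticeCube.1 hk i).1
  have h2 : (k i).toNat ≤ s.sup (fun k => (k i).toNat) := le_sup (f := fun k => (k i).toNat) hks
  omega

lemma not_summable_of_le_on_latticeCube [Nonempty ι] {f : (ι → ℤ) → ℝ} {c : ℝ} (hc : 0 < c)
    (hf : ∀ N : ℕ, 0 < N → ∀ k ∈ latticeCube ι N, c / N ^ Fintype.card ι ≤ f k) :
    ¬ Summable f := by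
  intro hsum
  obtain ⟨s, hs⟩ := summable_iff_vanishing_norm.1 hsum c hc
  obtain ⟨N, hN, hdisj⟩ := exists_disjoint_latticeCube s
  have hcube : c ≤ ∑ k ∈ latticeCube ι N, f k :=
    calc c = #(latticeCube ι N) • (c / N ^ Fintype.card ι) := by
          rw [card_latticeCube, nsmul_eq_mul]; push_cast; field_simp
      _ ≤ ∑ k ∈ latticeCube ι N, f k := card_nsmul_le_sum _ _ _ (hf N hN)
  exact (hcube.trans (Real.le_norm_self _)).not_gt (hs _ hdisj)

lemma abs_le_of_mem_latticeCube {d : (ι → ℤ) → ℝ} {C : ℝ} (hC : 0 ≤ C)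
    (h : ∀ k j, |d (k + Pi.single j 1) - d k| ≤ C) {N : ℕ} (hN : 0 < N) {k : ι → ℤ}
    (hk : k ∈ latticeCube ι N) :
    |d k| ≤ (|d 0| + 2 * C * Fintype.card ι) * N := by
  have hcoord : ∀ i, |(k i : ℝ)| ≤ 2 * N := fun i => by
    obtain ⟨hlo, hhi⟩ := mem_latticeCube.1 hk i
    rw [abs_of_nonneg (by exact_mod_cast (Int.natCast_nonneg N).trans hlo)]
    exact_mod_cast hhi.le
  have hN1 : (1 : ℝ) ≤ N := by exact_mod_cast hN
  calc |d k| ≤ |d 0| + |d (0 + k) - d 0| := by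
        rw [zero_add]; linarith [abs_sub_abs_le_abs_sub (d k) (d 0)]
    _ ≤ |d 0| + C * ∑ i, |(k i : ℝ)| := by gcongr; exact abs_add_sub_le_mul_sum_abs h 0 k
    _ ≤ |d 0| + C * ∑ _i : ι, 2 * (N : ℝ) := by gcongr with i; exact hcoord i
    _ ≤ (|d 0| + 2 * C * Fintype.card ι) * N := by
        rw [sum_const, card_univ, nsmul_eq_mul]
        nlinarith [abs_nonneg (d 0), mul_nonneg hC (Nat.cast_nonneg (α := ℝ) (Fintype.card ι))]

end LatticeCube

/-- No 𝕋ⁿ-equivariant Dirac operator on the noncommutative n-torus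
with bounded commutators is α-summable for α ≤ n: under the bounded-commutator
condition, |d|^{−α} is not summable over ℤⁿ \ {0} whenever 0 < α ≤ n. -/
theorem stmt_4 (n : ℕ) (hn : 1 ≤ n) (C : ℝ) (hC : 0 < C) (d : (Fin n → ℤ) → ℝ)
    (h : ∀ (k : Fin n → ℤ) (j : Fin n), |d (k + Pi.single j 1) - d k| ≤ C)
    (hne : ∀ k : Fin n → ℤ, k ≠ 0 → d k ≠ 0) :
    ∀ α : ℝ, 0 < α → α ≤ (n : ℝ) →
      ¬ Summable (fun k : {k : Fin n → ℤ // k ≠ 0} => |d k.1| ^ (-α)) := by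
  intro α hα hαn hs
  have : Nonempty (Fin n) := Fin.pos_iff_nonempty.1 hn
  set B := |d 0| + 2 * C * n + 1
  have hB : 1 ≤ B := by linarith [abs_nonneg (d 0), mul_nonneg hC.le (Nat.cast_nonneg (α := ℝ) n)]
  refine not_summable_of_le_on_latticeCube (c := (B ^ n)⁻¹) (by positivity) (fun N hN k hk => ?_)
    (summable_subtype_iff_indicator.1 hs :
      Summable ({k | k ≠ 0}.indicator fun k => |d k| ^ (-α)))
  have hk0 : k ≠ 0 := ne_zero_of_mem_latticeCube hN hk
  have hN1 : (1 : ℝ) ≤ N := by exact_mod_cast hN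
  have hdk : |d k| ≤ B * N := by
    have := abs_le_of_mem_latticeCube hC.le h hN hk
    rw [Fintype.card_fin] at this
    exact this.trans (mul_le_mul_of_nonneg_right (by linarith) (Nat.cast_nonneg N))
  rw [Set.indicator_of_mem hk0, Fintype.card_fin]
  calc (B ^ n)⁻¹ / N ^ n = (B * N) ^ (-(n : ℝ)) := by
        rw [Real.rpow_neg (by positivity), Real.rpow_natCast, mul_pow, div_eq_mul_inv, mul_inv]
    _ ≤ (B * N) ^ (-α) :=
        Real.rpow_le_rpow_of_exponent_le (one_le_mul_of_one_le_of_one_le hB hN1) (neg_le_neg hαn)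
    _ ≤ |d k| ^ (-α) := Real.rpow_le_rpow_of_nonpos (abs_pos.2 (hne k hk0)) hdk (by linarith)
end

section
/- Let ℓ ≥ 1. For n ∈ ℕ define δ_n := Σ_λ W(λ)², where the sum runs over all weakly decreasing functions λ : {0, 1, …, ℓ} → ℕ with λ(0) = n and λ(ℓ) = 0, and W(λ) := ∏_{0 ≤ i < j ≤ ℓ} (λ(i) − λ(j) + j − i)/(j − i). Then there exist constants c₁, c₂ > 0 such that for all n ≥ 1, c₁·n^{ℓ(ℓ+2)−1} ≤ δ_n ≤ c₂·n^{ℓ(ℓ+2)−1}. -/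
/-- The Weyl dimension formula for the irreducible unitary representation of
SU_q(ℓ+1) with highest weight (Young tableau) f : {0, …, ℓ} → ℕ. -/
noncomputable def weylDim (ℓ : ℕ) (f : Fin (ℓ + 1) → ℕ) : ℝ :=
  ∏ p ∈ Finset.univ.filter (fun p : Fin (ℓ + 1) × Fin (ℓ + 1) => p.1 < p.2),
    (((f p.1 : ℝ) - (f p.2 : ℝ) + ((p.2 : ℕ) : ℝ) - ((p.1 : ℕ) : ℝ)) /
      (((p.2 : ℕ) : ℝ) - ((p.1 : ℕ) : ℝ)))

/-- δ_n = Σ_λ W(λ)², summed over Young tableaux λ with λ(0) = n, λ(ℓ) = 0: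
the dimension of the eigenspace of eigenvalue n of the equivariant operator
D̃ : e^λ_{r,s} ↦ λ(0) e^λ_{r,s} on L²(SU_q(ℓ+1)). -/
noncomputable def deltaDim (ℓ n : ℕ) : ℝ :=
  ∑ᶠ f ∈ {f : Fin (ℓ + 1) → ℕ | Antitone f ∧ f 0 = n ∧ f (Fin.last ℓ) = 0},
    (weylDim ℓ f) ^ 2

/-!
Each of the ℓ(ℓ+1)/2 factors of W(λ) lies between 1 and λ(0) + 1, and a tableau with
λ(0) = n, λ(ℓ) = 0 is fixed by its ℓ - 1 inner rows, each at most n; this gives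
δ_n ≤ (n + 1)^(ℓ - 1 + ℓ(ℓ+1)). For the lower bound put g = ⌊n / 2ℓ⌋ and let each inner row
λ(j) range over [2g(ℓ - j), 2g(ℓ - j) + g]. These (g + 1)^(ℓ - 1) tableaux satisfy
λ(i) - λ(j) ≥ (j - i) g for i < j, so every factor of W(λ) is at least g + 1, and
δ_n ≥ (g + 1)^(ℓ - 1 + ℓ(ℓ+1)) with n < 2ℓ(g + 1).
-/

open Finset

lemma two_mul_card_filter_fst_lt_snd (ℓ : ℕ) :
    2 * #{p : Fin (ℓ + 1) × Fin (ℓ + 1) | p.1 < p.2} = ℓ * (ℓ + 1) := by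
  rw [Fintype.card_product_filter_lt, Fintype.card_fin, Nat.choose_two_right,
    Nat.mul_div_cancel' (Nat.even_mul_pred_self _).two_dvd, mul_comm, Nat.add_sub_cancel]

lemma one_le_val_sub_val_of_lt {ℓ : ℕ} {i j : Fin (ℓ + 1)} (h : i < j) :
    1 ≤ ((j : ℕ) : ℝ) - ((i : ℕ) : ℝ) := by
  have : (i : ℕ) + 1 ≤ j := h
  have : ((i : ℕ) : ℝ) + 1 ≤ (j : ℕ) := by exact_mod_cast this
  linarith

lemma weylDim_le_pow {ℓ : ℕ} {f : Fin (ℓ + 1) → ℕ} (hf : Antitone f) :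
    weylDim ℓ f ≤ ((f 0 : ℝ) + 1) ^ #{p : Fin (ℓ + 1) × Fin (ℓ + 1) | p.1 < p.2} := by
  rw [weylDim, ← prod_const]
  refine prod_le_prod (fun p hp => ?_) (fun p hp => ?_) <;> rw [mem_filter] at hp
  all_goals
    have hd := one_le_val_sub_val_of_lt hp.2
    have hji : (f p.2 : ℝ) ≤ f p.1 := by exact_mod_cast hf hp.2.le
    have h0 : (f p.1 : ℝ) ≤ f 0 := by exact_mod_cast hf (Fin.zero_le _)
  · exact div_nonneg (by linarith) (by linarith)
  · rw [div_le_iff₀ (by linarith)]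
    nlinarith

lemma pow_le_weylDim {ℓ g : ℕ} {f : Fin (ℓ + 1) → ℕ}
    (hgap : ∀ i j : Fin (ℓ + 1), i < j → f j + (j - i : ℕ) * g ≤ f i) :
    ((g : ℝ) + 1) ^ #{p : Fin (ℓ + 1) × Fin (ℓ + 1) | p.1 < p.2} ≤ weylDim ℓ f := by
  rw [weylDim, ← prod_const]
  refine prod_le_prod (fun _ _ => by positivity) (fun p hp => ?_)
  rw [mem_filter] at hp
  have hd := one_le_val_sub_val_of_lt hp.2
  have hgap' : (f p.2 : ℝ) + (((p.2 : ℕ) : ℝ) - ((p.1 : ℕ) : ℝ)) * g ≤ f p.1 := by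
    have := hgap _ _ hp.2
    rw [← Nat.cast_sub hp.2.le]
    exact_mod_cast this
  rw [le_div_iff₀ (by linarith)]
  nlinarith

lemma sq_weylDim_le {ℓ : ℕ} {f : Fin (ℓ + 1) → ℕ} (hf : Antitone f) :
    weylDim ℓ f ^ 2 ≤ ((f 0 : ℝ) + 1) ^ (ℓ * (ℓ + 1)) := by
  rw [← two_mul_card_filter_fst_lt_snd, mul_comm, pow_mul]
  have hpos : (0 : ℝ) ≤ weylDim ℓ f :=
    le_trans (by positivity) (pow_le_weylDim (g := 0) fun i j h => by simpa using hf h.le)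
  exact pow_le_pow_left₀ hpos (weylDim_le_pow hf) 2

lemma pow_le_sq_weylDim {ℓ g : ℕ} {f : Fin (ℓ + 1) → ℕ}
    (hgap : ∀ i j : Fin (ℓ + 1), i < j → f j + (j - i : ℕ) * g ≤ f i) :
    ((g : ℝ) + 1) ^ (ℓ * (ℓ + 1)) ≤ weylDim ℓ f ^ 2 := by
  rw [← two_mul_card_filter_fst_lt_snd, mul_comm, pow_mul]
  exact pow_le_pow_left₀ (by positivity) (pow_le_weylDim hgap) 2

def youngTableaux (ℓ n : ℕ) : Set (Fin (ℓ + 1) → ℕ) :=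
  {f | Antitone f ∧ f 0 = n ∧ f (Fin.last ℓ) = 0}

lemma youngTableaux_finite (ℓ n : ℕ) : (youngTableaux ℓ n).Finite :=
  (Set.finite_Iic fun _ => n).subset fun _ ⟨hf, h0, _⟩ i => h0 ▸ hf (Fin.zero_le i)

lemma deltaDim_eq_sum (ℓ n : ℕ) :
    deltaDim ℓ n = ∑ f ∈ (youngTableaux_finite ℓ n).toFinset, weylDim ℓ f ^ 2 :=
  finsum_mem_eq_finite_toFinset_sum _ (youngTableaux_finite ℓ n)

def pinnedPiFinset (ℓ a b : ℕ) (s : Fin (ℓ + 1) → Finset ℕ) : Finset (Fin (ℓ + 1) → ℕ) :=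
  Fintype.piFinset fun j => if j = 0 then {a} else if j = Fin.last ℓ then {b} else s j

lemma card_pinnedPiFinset {ℓ m : ℕ} (a b : ℕ) {s : Fin (ℓ + 1) → Finset ℕ}
    (hs : ∀ j, #(s j) = m) : #(pinnedPiFinset ℓ a b s) = m ^ (ℓ - 1) := by
  cases ℓ with
  | zero => simp [pinnedPiFinset]
  | succ k =>
    rw [pinnedPiFinset, Fintype.card_piFinset, Fin.prod_univ_succ, Fin.prod_univ_castSucc]
    simp [Fin.succ_ne_zero, hs]

lemma youngTableaux_subset_pinnedPiFinset (ℓ n : ℕ) :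
    (youngTableaux_finite ℓ n).toFinset ⊆ pinnedPiFinset ℓ n 0 fun _ => range (n + 1) := by
  intro f hf
  obtain ⟨hf, h0, hlast⟩ := (youngTableaux_finite ℓ n).mem_toFinset.1 hf
  refine Fintype.mem_piFinset.2 fun j => ?_
  split_ifs with hj0 hjl
  · simp [hj0, h0]
  · simp [hjl, hlast]
  · exact mem_range_succ_iff.2 (h0 ▸ hf (Fin.zero_le j))

lemma card_youngTableaux_le (ℓ n : ℕ) :
    #(youngTableaux_finite ℓ n).toFinset ≤ (n + 1) ^ (ℓ - 1) :=
  (card_le_card (youngTableaux_subset_pinnedPiFinset ℓ n)).trans_eq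
    (card_pinnedPiFinset n 0 fun _ => card_range _)

def staircaseBox (ℓ n g : ℕ) : Finset (Fin (ℓ + 1) → ℕ) :=
  pinnedPiFinset ℓ n 0 fun j => Icc (2 * g * (ℓ - j)) (2 * g * (ℓ - j) + g)

lemma card_staircaseBox (ℓ n g : ℕ) : #(staircaseBox ℓ n g) = (g + 1) ^ (ℓ - 1) :=
  card_pinnedPiFinset n 0 fun _ => by rw [Nat.card_Icc]; omega

lemma gap_of_mem_staircaseBox {ℓ n g : ℕ} (hn : 2 * ℓ * g ≤ n) {f : Fin (ℓ + 1) → ℕ}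
    (hf : f ∈ staircaseBox ℓ n g) (i j : Fin (ℓ + 1)) (hij : i < j) :
    f j + (j - i : ℕ) * g ≤ f i := by
  have hlo : ∀ j : Fin (ℓ + 1), 2 * g * (ℓ - j) ≤ f j := by
    intro j
    have := Fintype.mem_piFinset.1 hf j
    split_ifs at this with hj0 hjl
    · simp_all only [mem_singleton, Fin.val_zero, Nat.sub_zero]
      linarith
    · simp_all
    · exact (mem_Icc.1 this).1
  have hhi : ∀ j : Fin (ℓ + 1), j ≠ 0 → f j ≤ 2 * g * (ℓ - j) + g := by
    intro j hj0
    have := Fintype.mem_piFinset.1 hf j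
    split_ifs at this with hjl <;> simp_all
  have hij' : (i : ℕ) < j := hij
  have hd : 1 ≤ (j : ℕ) - i := by omega
  have hfi := hlo i
  rw [show ℓ - (i : ℕ) = (ℓ - j) + (j - i) by omega] at hfi
  have hfj := hhi j (Fin.ne_zero_of_lt hij)
  nlinarith

lemma staircaseBox_subset_youngTableaux {ℓ n g : ℕ} (hℓ : 1 ≤ ℓ) (hn : 2 * ℓ * g ≤ n) :
    staircaseBox ℓ n g ⊆ (youngTableaux_finite ℓ n).toFinset := by
  intro f hf
  have hlast : Fin.last ℓ ≠ 0 := Fin.ext_iff.not.2 (by simpa using Nat.one_le_iff_ne_zero.1 hℓ)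
  refine (youngTableaux_finite ℓ n).mem_toFinset.2 ⟨?_, ?_, ?_⟩
  · intro i j hij
    rcases hij.eq_or_lt with rfl | hlt
    · rfl
    · exact le_of_add_le_left (gap_of_mem_staircaseBox hn hf i j hlt)
  · simpa using Fintype.mem_piFinset.1 hf 0
  · simpa [hlast] using Fintype.mem_piFinset.1 hf (Fin.last ℓ)

lemma sub_one_add_mul_succ_eq {ℓ : ℕ} (hℓ : 1 ≤ ℓ) : ℓ - 1 + ℓ * (ℓ + 1) = ℓ * (ℓ + 2) - 1 := by
  have : ℓ * (ℓ + 2) = ℓ * (ℓ + 1) + ℓ := by ring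
  omega

lemma deltaDim_le {ℓ : ℕ} (hℓ : 1 ≤ ℓ) (n : ℕ) :
    deltaDim ℓ n ≤ ((n : ℝ) + 1) ^ (ℓ * (ℓ + 2) - 1) := by
  have hterm : ∀ f ∈ (youngTableaux_finite ℓ n).toFinset,
      weylDim ℓ f ^ 2 ≤ ((n : ℝ) + 1) ^ (ℓ * (ℓ + 1)) := by
    intro f hf
    obtain ⟨hf, h0, -⟩ := (youngTableaux_finite ℓ n).mem_toFinset.1 hf
    simpa [h0] using sq_weylDim_le hf
  calc deltaDim ℓ n
      ≤ #(youngTableaux_finite ℓ n).toFinset * ((n : ℝ) + 1) ^ (ℓ * (ℓ + 1)) := by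
        rw [deltaDim_eq_sum, ← nsmul_eq_mul]
        exact sum_le_card_nsmul _ _ _ hterm
    _ ≤ ((n : ℝ) + 1) ^ (ℓ - 1) * ((n : ℝ) + 1) ^ (ℓ * (ℓ + 1)) := by
        gcongr
        exact_mod_cast card_youngTableaux_le ℓ n
    _ = ((n : ℝ) + 1) ^ (ℓ * (ℓ + 2) - 1) := by
        rw [← pow_add, sub_one_add_mul_succ_eq hℓ]

lemma pow_le_deltaDim {ℓ n g : ℕ} (hℓ : 1 ≤ ℓ) (hn : 2 * ℓ * g ≤ n) :
    ((g : ℝ) + 1) ^ (ℓ * (ℓ + 2) - 1) ≤ deltaDim ℓ n := by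
  calc ((g : ℝ) + 1) ^ (ℓ * (ℓ + 2) - 1)
      = #(staircaseBox ℓ n g) * ((g : ℝ) + 1) ^ (ℓ * (ℓ + 1)) := by
        rw [card_staircaseBox, ← sub_one_add_mul_succ_eq hℓ, pow_add]
        push_cast
        ring
    _ ≤ ∑ f ∈ staircaseBox ℓ n g, weylDim ℓ f ^ 2 := by
        rw [← nsmul_eq_mul]
        exact card_nsmul_le_sum _ _ _ fun f hf =>
          pow_le_sq_weylDim (gap_of_mem_staircaseBox hn hf)
    _ ≤ deltaDim ℓ n := by
        rw [deltaDim_eq_sum]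
        exact sum_le_sum_of_subset_of_nonneg (staircaseBox_subset_youngTableaux hℓ hn)
          fun _ _ _ => sq_nonneg _

/-- δ_n grows exactly like n^{ℓ(ℓ+2)−1}. -/
theorem stmt_10 (ℓ : ℕ) (hℓ : 1 ≤ ℓ) :
    ∃ c₁ c₂ : ℝ, 0 < c₁ ∧ 0 < c₂ ∧ ∀ n : ℕ, 1 ≤ n →
      c₁ * (n : ℝ) ^ (ℓ * (ℓ + 2) - 1) ≤ deltaDim ℓ n ∧
      deltaDim ℓ n ≤ c₂ * (n : ℝ) ^ (ℓ * (ℓ + 2) - 1) := by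
  set E := ℓ * (ℓ + 2) - 1
  have h2ℓ : (0 : ℝ) < 2 * ℓ := by positivity
  refine ⟨((2 * ℓ : ℝ) ^ E)⁻¹, 2 ^ E, by positivity, by positivity, fun n hn => ⟨?_, ?_⟩⟩
  · have hn_lt : n < 2 * ℓ * (n / (2 * ℓ) + 1) := Nat.lt_mul_div_succ n (by omega)
    have hn_le : (n : ℝ) / (2 * ℓ) ≤ ((n / (2 * ℓ) : ℕ) : ℝ) + 1 := by
      rw [div_le_iff₀ h2ℓ]
      exact_mod_cast (by linarith : n ≤ (n / (2 * ℓ) + 1) * (2 * ℓ))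
    calc ((2 * ℓ : ℝ) ^ E)⁻¹ * (n : ℝ) ^ E = ((n : ℝ) / (2 * ℓ)) ^ E := by
          rw [div_pow, inv_mul_eq_div]
      _ ≤ (((n / (2 * ℓ) : ℕ) : ℝ) + 1) ^ E := by gcongr
      _ ≤ deltaDim ℓ n := pow_le_deltaDim hℓ (Nat.mul_div_le n (2 * ℓ))
  · have hn' : (1 : ℝ) ≤ n := by exact_mod_cast hn
    calc deltaDim ℓ n ≤ ((n : ℝ) + 1) ^ E := deltaDim_le hℓ n
      _ ≤ (2 * n : ℝ) ^ E := by gcongr; linarith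
      _ = 2 ^ E * (n : ℝ) ^ E := mul_pow _ _ _
end

section
/- Let ℓ ≥ 1. For n, k ∈ ℕ with k ≤ n, let μ_{n,k} : {0, 1, …, ℓ} → ℕ be the weakly decreasing function with μ_{n,k}(0) = n, μ_{n,k}(j) = k for 1 ≤ j ≤ ℓ−1, and μ_{n,k}(ℓ) = 0, and set W(μ_{n,k}) := ∏_{0 ≤ i < j ≤ ℓ} (μ_{n,k}(i) − μ_{n,k}(j) + j − i)/(j − i). Define δ'_n := Σ_{k=0}^{n} W(μ_{n,k}). Then there exist constants c₁, c₂ > 0 such that for all n ≥ 1, c₁·n^{2ℓ} ≤ δ'_n ≤ c₂·n^{2ℓ}. -/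
/-- The Young tableau μ_{n,k} = (n, k, k, …, k, 0) : {0, …, ℓ} → ℕ. -/
def muTab (ℓ n k : ℕ) : Fin (ℓ + 1) → ℕ :=
  fun j => if (j : ℕ) = 0 then n else if (j : ℕ) = ℓ then 0 else k

/-- δ'_n = Σ_{k=0}^{n} W(μ_{n,k}): the dimension of the eigenspace of
eigenvalue n of the equivariant Dirac operator D_eq on L²(S_q^{2ℓ+1}). -/
noncomputable def deltaSph (ℓ n : ℕ) : ℝ :=
  ∑ k ∈ Finset.range (n + 1), weylDim ℓ (muTab ℓ n k)

/-!
Since `μ_{n,k}` is constant on the rows `1, …, ℓ - 1`, only the `2ℓ - 1` factors of `W(μ_{n,k})`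
belonging to pairs `(0, j)` or `(i, ℓ)` differ from `1`, and such a factor `(d + j - i) / (j - i)`
lies between `(1 + d) / ℓ` and `1 + d`, where the jump `d` is `n`, `n - k` or `k`. Hence every
`W(μ_{n,k})` is at most `(n + 1) ^ (2ℓ - 1)`, so `δ'_n ≤ (n + 1) ^ (2ℓ)`, while each of the roughly
`n / 4` indices `n / 4 ≤ k ≤ n / 2` has `W(μ_{n,k}) ≥ (n / (4ℓ)) ^ (2ℓ - 1)`.
-/

open Finset

section WeylFactor

variable {ℓ : ℕ} (f : Fin (ℓ + 1) → ℕ) {p : Fin (ℓ + 1) × Fin (ℓ + 1)}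

noncomputable def weylFactor (p : Fin (ℓ + 1) × Fin (ℓ + 1)) : ℝ :=
  ((f p.1 : ℝ) - (f p.2 : ℝ) + ((p.2 : ℕ) : ℝ) - ((p.1 : ℕ) : ℝ)) /
    (((p.2 : ℕ) : ℝ) - ((p.1 : ℕ) : ℝ))

theorem weylDim_eq_prod_weylFactor :
    weylDim ℓ f = ∏ p ∈ univ.filter (fun p : Fin (ℓ + 1) × Fin (ℓ + 1) => p.1 < p.2),
      weylFactor f p :=
  rfl

theorem weylFactor_eq_one (hp : p.1 < p.2) (hf : f p.1 = f p.2) : weylFactor f p = 1 := by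
  have hd : ((p.1 : ℕ) : ℝ) < (p.2 : ℕ) := by exact_mod_cast hp
  rw [weylFactor, hf, sub_self, zero_add, div_self (sub_ne_zero.2 hd.ne')]

variable {f}

theorem weylFactor_nonneg (hp : p.1 < p.2) (hf : f p.2 ≤ f p.1) : 0 ≤ weylFactor f p := by
  have hd : ((p.1 : ℕ) : ℝ) < (p.2 : ℕ) := by exact_mod_cast hp
  have hf' : (f p.2 : ℝ) ≤ f p.1 := by exact_mod_cast hf
  exact div_nonneg (by linarith) (by linarith)

theorem weylFactor_le (hp : p.1 < p.2) (hf : f p.2 ≤ f p.1) :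
    weylFactor f p ≤ 1 + ((f p.1 : ℝ) - f p.2) := by
  have hd : ((p.1 : ℕ) : ℝ) + 1 ≤ (p.2 : ℕ) := by exact_mod_cast hp
  have hf' : (f p.2 : ℝ) ≤ f p.1 := by exact_mod_cast hf
  rw [weylFactor, div_le_iff₀ (by linarith)]
  nlinarith

theorem le_weylFactor (hp : p.1 < p.2) (hf : f p.2 ≤ f p.1) :
    (1 + ((f p.1 : ℝ) - f p.2)) / ℓ ≤ weylFactor f p := by
  have hd : ((p.1 : ℕ) : ℝ) + 1 ≤ (p.2 : ℕ) := by exact_mod_cast hp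
  have hℓ : ((p.2 : ℕ) : ℝ) ≤ ℓ := by exact_mod_cast Nat.lt_succ_iff.1 p.2.isLt
  have hf' : (f p.2 : ℝ) ≤ f p.1 := by exact_mod_cast hf
  rw [weylFactor, div_le_div_iff₀ (by linarith) (by linarith)]
  nlinarith [(p.1 : ℕ).cast_nonneg (α := ℝ)]

end WeylFactor

def boundaryPairs (ℓ : ℕ) : Finset (Fin (ℓ + 1) × Fin (ℓ + 1)) :=
  univ.filter (fun p => p.1 < p.2 ∧ (p.1 = 0 ∨ p.2 = Fin.last ℓ))

theorem lt_of_mem_boundaryPairs {ℓ : ℕ} {p : Fin (ℓ + 1) × Fin (ℓ + 1)}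
    (hp : p ∈ boundaryPairs ℓ) : p.1 < p.2 :=
  (mem_filter.1 hp).2.1

theorem card_boundaryPairs (ℓ : ℕ) : #(boundaryPairs ℓ) = 2 * ℓ - 1 := by
  have hsplit : boundaryPairs ℓ = ({0} ×ˢ Ioi 0) ∪ (Ioo 0 (Fin.last ℓ) ×ˢ {Fin.last ℓ}) := by
    ext ⟨a, b⟩
    have := b.isLt
    simp only [boundaryPairs, mem_filter, mem_univ, true_and, mem_union, mem_product,
      mem_singleton, mem_Ioi, mem_Ioo, Fin.lt_def, Fin.ext_iff, Fin.val_last, Fin.val_zero]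
    omega
  have hdisj : Disjoint ({0} ×ˢ Ioi 0) (Ioo 0 (Fin.last ℓ) ×ˢ {Fin.last ℓ}) := by
    rw [disjoint_left]
    rintro ⟨a, b⟩ h₁ h₂
    simp only [mem_product, mem_singleton, mem_Ioo] at h₁ h₂
    exact h₂.1.1.ne' h₁.1
  rw [hsplit, card_union_of_disjoint hdisj, card_product, card_product, card_singleton,
    card_singleton, Fin.card_Ioi, Fin.card_Ioo, Fin.val_last, Fin.val_zero]
  omega

section MuTab

variable {ℓ n k : ℕ}

theorem muTab_antitone (hk : k ≤ n) : Antitone (muTab ℓ n k) := by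
  intro i j hij
  have := j.isLt
  have : (i : ℕ) ≤ j := hij
  simp only [muTab]
  split_ifs <;> omega

theorem muTab_le (hk : k ≤ n) (j : Fin (ℓ + 1)) : muTab ℓ n k j ≤ n := by
  simp only [muTab]
  split_ifs <;> omega

theorem muTab_of_ne {j : Fin (ℓ + 1)} (h₀ : (j : ℕ) ≠ 0) (hℓ : (j : ℕ) ≠ ℓ) :
    muTab ℓ n k j = k := by
  simp only [muTab, if_neg h₀, if_neg hℓ]

theorem min_le_muTab_sub {p : Fin (ℓ + 1) × Fin (ℓ + 1)} (hp : p ∈ boundaryPairs ℓ) :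
    min k (n - k) ≤ muTab ℓ n k p.1 - muTab ℓ n k p.2 := by
  simp only [boundaryPairs, mem_filter, mem_univ, true_and, Fin.lt_def, Fin.ext_iff,
    Fin.val_last, Fin.val_zero] at hp
  simp only [muTab]
  split_ifs <;> omega

theorem weylDim_muTab_eq_prod_boundaryPairs :
    weylDim ℓ (muTab ℓ n k) = ∏ p ∈ boundaryPairs ℓ, weylFactor (muTab ℓ n k) p := by
  rw [weylDim_eq_prod_weylFactor, boundaryPairs, ← filter_filter]
  refine (prod_filter_of_ne fun p hp hne => ?_).symm
  have hlt : (p.1 : ℕ) < p.2 := (mem_filter.1 hp).2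
  have := p.2.isLt
  by_contra hinner
  simp only [not_or, Fin.ext_iff, Fin.val_zero, Fin.val_last] at hinner
  exact hne (weylFactor_eq_one _ hlt (by rw [muTab_of_ne, muTab_of_ne] <;> omega))

theorem weylDim_muTab_le (hk : k ≤ n) :
    weylDim ℓ (muTab ℓ n k) ≤ ((n : ℝ) + 1) ^ (2 * ℓ - 1) := by
  rw [weylDim_muTab_eq_prod_boundaryPairs, ← card_boundaryPairs, ← prod_const]
  refine prod_le_prod (fun p hp => ?_) fun p hp => ?_
  all_goals have hanti := muTab_antitone (ℓ := ℓ) hk (lt_of_mem_boundaryPairs hp).le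
  · exact weylFactor_nonneg (lt_of_mem_boundaryPairs hp) hanti
  · refine (weylFactor_le (lt_of_mem_boundaryPairs hp) hanti).trans ?_
    rw [← Nat.cast_sub hanti, add_comm]
    exact_mod_cast Nat.add_le_add_right ((Nat.sub_le _ _).trans (muTab_le hk p.1)) 1

theorem le_weylDim_muTab (hk : k ≤ n) :
    ((1 + min k (n - k) : ℕ) / ℓ : ℝ) ^ (2 * ℓ - 1) ≤ weylDim ℓ (muTab ℓ n k) := by
  rw [weylDim_muTab_eq_prod_boundaryPairs, ← card_boundaryPairs, ← prod_const]
  refine prod_le_prod (fun _ _ => by positivity) fun p hp => ?_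
  have hanti := muTab_antitone (ℓ := ℓ) hk (lt_of_mem_boundaryPairs hp).le
  refine le_trans ?_ (le_weylFactor (lt_of_mem_boundaryPairs hp) hanti)
  gcongr
  rw [← Nat.cast_sub hanti]
  exact_mod_cast Nat.add_le_add_left (min_le_muTab_sub hp) 1

end MuTab

theorem deltaSph_le {ℓ : ℕ} (hℓ : 1 ≤ ℓ) (n : ℕ) : deltaSph ℓ n ≤ ((n : ℝ) + 1) ^ (2 * ℓ) :=
  calc deltaSph ℓ n ≤ ∑ _k ∈ range (n + 1), ((n : ℝ) + 1) ^ (2 * ℓ - 1) :=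
        sum_le_sum fun _ hk => weylDim_muTab_le (Nat.lt_succ_iff.1 (mem_range.1 hk))
    _ = ((n : ℝ) + 1) ^ (2 * ℓ) := by
        rw [sum_const, card_range, nsmul_eq_mul, Nat.cast_succ, ← pow_succ',
          Nat.sub_add_cancel (by omega)]

theorem le_deltaSph (ℓ n : ℕ) : (n / 4 : ℝ) * (n / 4 / ℓ : ℝ) ^ (2 * ℓ - 1) ≤ deltaSph ℓ n := by
  set s := Icc (n / 4) (n / 2)
  have hs : s ⊆ range (n + 1) := fun k hk => by
    simp only [s, mem_Icc, mem_range] at hk ⊢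
    omega
  have hcard : (n / 4 : ℝ) ≤ #s := by
    have : n ≤ 4 * #s := by
      rw [Nat.card_Icc]
      omega
    rw [div_le_iff₀ four_pos, mul_comm]
    exact_mod_cast this
  have hterm : ∀ k ∈ s, (n / 4 / ℓ : ℝ) ^ (2 * ℓ - 1) ≤ weylDim ℓ (muTab ℓ n k) := by
    intro k hk
    rw [mem_Icc] at hk
    refine le_trans ?_ (le_weylDim_muTab (by omega))
    have : n ≤ 4 * (1 + min k (n - k)) := by omega
    gcongr
    rw [div_le_iff₀ four_pos, mul_comm]
    exact_mod_cast this
  calc (n / 4 : ℝ) * (n / 4 / ℓ : ℝ) ^ (2 * ℓ - 1)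
      ≤ #s * (n / 4 / ℓ : ℝ) ^ (2 * ℓ - 1) := by gcongr
    _ = ∑ _k ∈ s, (n / 4 / ℓ : ℝ) ^ (2 * ℓ - 1) := by rw [sum_const, nsmul_eq_mul]
    _ ≤ ∑ k ∈ s, weylDim ℓ (muTab ℓ n k) := sum_le_sum hterm
    _ ≤ deltaSph ℓ n := sum_le_sum_of_subset_of_nonneg hs fun k hk _ =>
        (by positivity : (0 : ℝ) ≤ _).trans
          (le_weylDim_muTab (Nat.lt_succ_iff.1 (mem_range.1 hk)))

/-- δ'_n grows exactly like n^{2ℓ}. -/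
theorem stmt_12 (ℓ : ℕ) (hℓ : 1 ≤ ℓ) :
    ∃ c₁ c₂ : ℝ, 0 < c₁ ∧ 0 < c₂ ∧ ∀ n : ℕ, 1 ≤ n →
      c₁ * (n : ℝ) ^ (2 * ℓ) ≤ deltaSph ℓ n ∧
      deltaSph ℓ n ≤ c₂ * (n : ℝ) ^ (2 * ℓ) := by
  have hℓ' : (0 : ℝ) < ℓ := by exact_mod_cast hℓ
  refine ⟨(4 * (4 * ℓ) ^ (2 * ℓ - 1))⁻¹, 2 ^ (2 * ℓ),
    inv_pos.2 (mul_pos four_pos (pow_pos (by positivity) _)), by positivity,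
    fun n hn => ⟨?_, ?_⟩⟩
  · calc (4 * (4 * ℓ) ^ (2 * ℓ - 1) : ℝ)⁻¹ * (n : ℝ) ^ (2 * ℓ)
        = (n / 4 : ℝ) * (n / 4 / ℓ : ℝ) ^ (2 * ℓ - 1) := by
          rw [← Nat.sub_add_cancel (show 1 ≤ 2 * ℓ by omega), pow_succ', Nat.add_sub_cancel,
            div_div, div_pow]
          field_simp
      _ ≤ deltaSph ℓ n := le_deltaSph ℓ n
  · calc deltaSph ℓ n ≤ ((n : ℝ) + 1) ^ (2 * ℓ) := deltaSph_le hℓ n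
      _ ≤ (2 * n : ℝ) ^ (2 * ℓ) := by
          gcongr
          linarith [(show (1 : ℝ) ≤ n by exact_mod_cast hn)]
      _ = 2 ^ (2 * ℓ) * (n : ℝ) ^ (2 * ℓ) := mul_pow _ _ _
end
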